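/- Let K be a field, L/K a finite field extension, and C a K-linear abelian category. If (I, f) is an injective object of the base change category C_L, then I is an injective object of C. -/

import Mathlib

open CategoryTheory CategoryTheory.Limits

universe v u

variable (K : Type*) [Field K] (L : Type*) [Field L] [Algebra K L]
variable (C : Type u) [Category.{v} C] [Abelian C] [Linear K C]

structure BaseChange where
  obj : C
  str : L →ₐ[K] End obj

namespace BaseChange

variable {K L C}

@[ext]
structure Hom (X Y : BaseChange K L C) where
  hom : X.obj ⟶ Y.obj
  comm : ∀ l : L, X.str l ≫ hom = hom ≫ Y.str l

instance : Category (BaseChange K L C) where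
  Hom X Y := Hom X Y
  id X := ⟨𝟙 X.obj, fun l => by simp⟩
  comp {X Y Z} f g := ⟨f.hom ≫ g.hom, fun l => by
    rw [← Category.assoc, f.comm, Category.assoc, g.comm, Category.assoc]⟩

@[ext]
lemma hom_ext {X Y : BaseChange K L C} {f g : X ⟶ Y} (h : f.hom = g.hom) : f = g :=
  Hom.ext h

@[simp] lemma id_hom (X : BaseChange K L C) : Hom.hom (𝟙 X) = 𝟙 X.obj := rfl

@[simp] lemma comp_hom {X Y Z : BaseChange K L C} (f : X ⟶ Y) (g : Y ⟶ Z) :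
    (f ≫ g).hom = f.hom ≫ g.hom := rfl

section Preadditive

variable {X Y : BaseChange K L C}

instance : Zero (X ⟶ Y) := ⟨⟨0, fun l => by simp⟩⟩
instance : Add (X ⟶ Y) :=
  ⟨fun f g => ⟨f.hom + g.hom, fun l => by
    simp [Preadditive.comp_add, Preadditive.add_comp, f.comm, g.comm]⟩⟩
instance : Neg (X ⟶ Y) :=
  ⟨fun f => ⟨-f.hom, fun l => by simp [f.comm]⟩⟩
instance : Sub (X ⟶ Y) :=
  ⟨fun f g => ⟨f.hom - g.hom, fun l => by
    simp [Preadditive.comp_sub, Preadditive.sub_comp, f.comm, g.comm]⟩⟩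
instance : SMul ℕ (X ⟶ Y) :=
  ⟨fun n f => ⟨n • f.hom, fun l => by simp [f.comm]⟩⟩
instance : SMul ℤ (X ⟶ Y) :=
  ⟨fun n f => ⟨n • f.hom, fun l => by simp [f.comm]⟩⟩

@[simp] lemma zero_hom : (0 : X ⟶ Y).hom = 0 := rfl
@[simp] lemma add_hom (f g : X ⟶ Y) : (f + g).hom = f.hom + g.hom := rfl
@[simp] lemma neg_hom (f : X ⟶ Y) : (-f).hom = -f.hom := rfl
@[simp] lemma sub_hom (f g : X ⟶ Y) : (f - g).hom = f.hom - g.hom := rfl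

instance : AddCommGroup (X ⟶ Y) :=
  Function.Injective.addCommGroup (Hom.hom : (X ⟶ Y) → (X.obj ⟶ Y.obj))
    (fun _ _ h => Hom.ext h) rfl (fun _ _ => rfl) (fun _ => rfl) (fun _ _ => rfl)
    (fun _ _ => rfl) (fun _ _ => rfl)

instance : Preadditive (BaseChange K L C) where
  add_comp _ _ _ f f' g := by apply hom_ext; simp [Preadditive.add_comp]
  comp_add _ _ _ f g g' := by apply hom_ext; simp [Preadditive.comp_add]

end Preadditive

end BaseChange

open BaseChange


/-! The forgetful functor `C_L ⥤ C` has a left adjoint `A ↦ L ⊗_K A`: choosing a `K`-basis of `L`,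
this is `A ^ [L : K]` with `L` acting through the matrices of left multiplication. The left adjoint
is exact, in particular it preserves monomorphisms, so the forgetful functor preserves injective
objects. -/

noncomputable section

section BiproductMatrix

open Matrix

variable (R : Type*) [CommSemiring R] {D : Type*} [Category D] [Preadditive D] [Linear R D]
  [HasFiniteBiproducts D] {ι : Type} [Fintype ι] [DecidableEq ι]

def biproductMatrixLinearMap (A : D) :
    Matrix ι ι R →ₗ[R] ((⨁ fun _ : ι => A) ⟶ ⨁ fun _ : ι => A) where
  toFun M := biproduct.matrix fun j i => M i j • 𝟙 A
  map_add' M N := by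
    refine biproduct.hom_ext' _ _ fun j => biproduct.hom_ext _ _ fun i => ?_
    simp [add_smul]
  map_smul' r M := by
    refine biproduct.hom_ext' _ _ fun j => biproduct.hom_ext _ _ fun i => ?_
    simp [smul_smul]

def biproductMatrixAlgHom (A : D) : Matrix ι ι R →ₐ[R] End (⨁ fun _ : ι => A) :=
  AlgHom.ofLinearMap (biproductMatrixLinearMap R A)
    (by
      refine biproduct.hom_ext' _ _ fun j => biproduct.hom_ext _ _ fun i => ?_
      simp [biproductMatrixLinearMap, End.one_def, Matrix.one_apply, biproduct.ι_π, eq_comm])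
    (fun M N => by
      refine biproduct.hom_ext' _ _ fun j => biproduct.hom_ext _ _ fun i => ?_
      simp [biproductMatrixLinearMap, End.mul_def, biproduct.lift_matrix, Matrix.mul_apply,
        Finset.sum_smul, smul_smul])

lemma ι_biproductMatrixAlgHom (A : D) (M : Matrix ι ι R) (j : ι) :
    biproduct.ι _ j ≫ biproductMatrixAlgHom R A M = biproduct.lift fun i => M i j • 𝟙 A :=
  biproduct.ι_matrix _ _

lemma lift_smul_id_comp_biproductMatrixAlgHom (A : D) (v : ι → R) (M : Matrix ι ι R) :
    biproduct.lift (fun i => v i • 𝟙 A) ≫ biproductMatrixAlgHom R A M =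
      biproduct.lift fun i => (M *ᵥ v) i • 𝟙 A := by
  refine biproduct.hom_ext _ _ fun i => ?_
  simp [biproductMatrixAlgHom, biproductMatrixLinearMap, biproduct.lift_matrix, Matrix.mulVec,
    dotProduct, Finset.sum_smul, smul_smul, mul_comm]

lemma biproductMatrixAlgHom_comp_map {A B : D} (u : A ⟶ B) (M : Matrix ι ι R) :
    biproductMatrixAlgHom R A M ≫ biproduct.map (fun _ => u) =
      biproduct.map (fun _ => u) ≫ biproductMatrixAlgHom R B M := by
  refine biproduct.hom_ext' _ _ fun j => biproduct.hom_ext _ _ fun i => ?_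
  simp [biproductMatrixAlgHom, biproductMatrixLinearMap]

lemma lift_single_smul_id_eq_ι (A : D) (j : ι) :
    biproduct.lift (fun i => Finsupp.single j (1 : R) i • 𝟙 A) = biproduct.ι (fun _ => A) j := by
  refine biproduct.hom_ext _ _ fun i => ?_
  simp [Finsupp.single_apply, biproduct.ι_π]

end BiproductMatrix

lemma Algebra.sum_leftMulMatrix_smul {R S : Type*} [CommRing R] [Ring S] [Algebra R S]
    {ι : Type*} [Fintype ι] [DecidableEq ι] (b : Module.Basis ι R S) (x : S) (k : ι) :
    ∑ i, Algebra.leftMulMatrix b x i k • b i = x * b k := by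
  simp [Algebra.leftMulMatrix_eq_repr_mul, b.sum_repr]

attribute [local instance] Abelian.hasFiniteBiproducts

namespace BaseChange

variable {K L C}

@[simps]
def forget : BaseChange K L C ⥤ C where
  obj X := X.obj
  map f := f.hom

section

variable {ι : Type} [Fintype ι]

lemma comp_str_sum_smul (X : BaseChange K L C) {A : C} (g : A ⟶ X.obj) (c : ι → K) (x : ι → L) :
    g ≫ X.str (∑ i, c i • x i) = ∑ i, c i • (g ≫ X.str (x i)) := by
  rw [map_sum]
  exact (Preadditive.comp_sum _ _ _).trans
    (Finset.sum_congr rfl fun i _ => by rw [map_smul]; exact Linear.comp_smul _ _ _ _ _ _)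

lemma lift_smul_id_comp_desc_str (X : BaseChange K L C) {A : C} (g : A ⟶ X.obj) (c : ι → K)
    (x : ι → L) :
    biproduct.lift (fun i => c i • 𝟙 A) ≫ biproduct.desc (fun i => g ≫ X.str (x i)) =
      g ≫ X.str (∑ i, c i • x i) := by
  rw [comp_str_sum_smul, biproduct.lift_desc]
  simp only [Linear.smul_comp, Category.id_comp]

end

variable {ι : Type} [Fintype ι] [DecidableEq ι] (b : Module.Basis ι K L)

-- Reducible so that `rw` identifies `((induced C b).obj A).obj` with `⨁ fun _ => A`.
variable (C) in
@[simps, reducible]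
def induced : C ⥤ BaseChange K L C where
  obj A := ⟨⨁ fun _ : ι => A, (biproductMatrixAlgHom K A).comp (Algebra.leftMulMatrix b)⟩
  map u := ⟨biproduct.map fun _ => u, fun _ => biproductMatrixAlgHom_comp_map (D := C) K u _⟩

instance : (induced C b).PreservesMonomorphisms where
  preserves u _ := ⟨fun _ _ h => hom_ext ((cancel_mono (biproduct.map fun _ => u)).1
    (congrArg Hom.hom h))⟩

lemma lift_repr_one_comp_str (A : C) (l : L) :
    biproduct.lift (fun i => b.repr 1 i • 𝟙 A) ≫ ((induced C b).obj A).str l =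
      biproduct.lift fun i => b.repr l i • 𝟙 A := by
  rw [induced_obj_str, AlgHom.comp_apply, lift_smul_id_comp_biproductMatrixAlgHom,
    Algebra.leftMulMatrix_mulVec_repr, mul_one]

-- `biproduct.lift fun i => b.repr 1 i • 𝟙 A` is the unit `a ↦ 1 ⊗ a` of the adjunction.
@[simps]
def inducedHomEquiv (A : C) (X : BaseChange K L C) :
    ((induced C b).obj A ⟶ X) ≃ (A ⟶ X.obj) where
  toFun h := biproduct.lift (fun i => b.repr 1 i • 𝟙 A) ≫ h.hom
  invFun g := ⟨biproduct.desc fun i => g ≫ X.str (b i), fun l => by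
    refine biproduct.hom_ext' _ _ fun k => ?_
    rw [induced_obj_str, AlgHom.comp_apply, ← Category.assoc, ι_biproductMatrixAlgHom,
      lift_smul_id_comp_desc_str, Algebra.sum_leftMulMatrix_smul, biproduct.ι_desc_assoc,
      Category.assoc, map_mul, End.mul_def]⟩
  left_inv h := by
    refine hom_ext (biproduct.hom_ext' _ _ fun k => ?_)
    dsimp only
    rw [biproduct.ι_desc, Category.assoc, ← h.comm, ← Category.assoc, lift_repr_one_comp_str,
      b.repr_self, lift_single_smul_id_eq_ι]
  right_inv g := by
    simp only [lift_smul_id_comp_desc_str, b.sum_repr, map_one, End.one_def, Category.comp_id]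

def inducedAdjunction : induced C b ⊣ forget :=
  Adjunction.mkOfHomEquiv
    { homEquiv := inducedHomEquiv b
      homEquiv_naturality_left_symm := fun {_ _ Y} f g => hom_ext <| by
        change biproduct.desc (fun i => (f ≫ g) ≫ Y.str (b i)) =
          biproduct.map (fun _ => f) ≫ biproduct.desc fun i => g ≫ Y.str (b i)
        rw [biproduct.map_desc]
        exact congrArg biproduct.desc (funext fun i => Category.assoc f g _)
      homEquiv_naturality_right := fun f g => (Category.assoc _ _ _).symm }

end BaseChange

/-- **Statement 11.** For a finite field extension `L/K` and a `K`-linear abelian category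
`C`: if `(I, f)` is an injective object of `C_L`, then `I` is injective in `C`. -/
theorem injective_of_baseChange_injective
    (K : Type*) [Field K] (L : Type*) [Field L] [Algebra K L] [FiniteDimensional K L]
    (C : Type u) [Category.{v} C] [Abelian C] [Linear K C]
    (X : BaseChange K L C) (hX : Injective X) : Injective X.obj :=
  (inducedAdjunction (Module.finBasis K L)).map_injective X hX
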